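/- Let F be a submodular function on V with F(∅) = 0 and f its Lovász extension. Then min_{S ⊆ V} F(S) = min_{x ∈ [0,1]^V} f(x). Moreover, for every x ∈ [0,1]^V there exists a threshold θ ∈ (0,1] such that the level set S_θ = {i ∈ V : x_i ≥ θ} satisfies F(S_θ) ≤ f(x). -/

import Mathlib

open Finset
open Finset

def Submodular {n : ℕ} (F : Finset (Fin n) → ℝ) : Prop :=
  ∀ S T : Finset (Fin n), F (S ∪ T) + F (S ∩ T) ≤ F S + F T

def basePolytope {n : ℕ} (F : Finset (Fin n) → ℝ) : Set (Fin n → ℝ) :=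
  {y | (∀ S : Finset (Fin n), ∑ i ∈ S, y i ≤ F S) ∧ ∑ i, y i = F Finset.univ}

def SortsDesc {n : ℕ} (x : Fin n → ℝ) (σ : Equiv.Perm (Fin n)) : Prop :=
  ∀ j k : Fin n, j ≤ k → x (σ k) ≤ x (σ j)

def lovaszVal {n : ℕ} (F : Finset (Fin n) → ℝ) (x : Fin n → ℝ) (σ : Equiv.Perm (Fin n)) : ℝ :=
  ∑ k : Fin n, x (σ k) *
    (F ((Finset.univ.filter (fun j => j ≤ k)).image ⇑σ)
      - F ((Finset.univ.filter (fun j => j < k)).image ⇑σ))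

def IsLovasz {n : ℕ} (F : Finset (Fin n) → ℝ) (f : (Fin n → ℝ) → ℝ) : Prop :=
  ∀ (x : Fin n → ℝ) (σ : Equiv.Perm (Fin n)), SortsDesc x σ → f x = lovaszVal F x σ

/-!
Sort `x ∈ [0,1]^V` decreasingly and pad the sorted values as `1 = t₀ ≥ t₁ ≥ ⋯ ≥ tₙ ≥ tₙ₊₁ = 0`.
Abel summation turns the Lovász sum into `f x = ∑ₖ (tₖ - tₖ₊₁) F(Sₖ)`, where `Sₖ` is the set of the
`k` largest coordinates (the `k = 0` term vanishes because `S₀ = ∅`). The weights are nonnegative and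
sum to `1`, so `f x` lies in the convex hull of the values `F(Sₖ)` of positive weight, and each such
`Sₖ` is the level set `{x ≥ tₖ}` with `tₖ ∈ (0,1]`. Hence some level set satisfies `F(S_θ) ≤ f x`,
while for the indicator of `S` every level set in `(0,1]` is `S`, so `f 1_S = F S`.
-/

section LovaszExtension

variable {n : ℕ}

theorem exists_sortsDesc (x : Fin n → ℝ) : ∃ σ, SortsDesc x σ :=
  ⟨Tuple.sort (fun i => -x i), fun _ _ hjk => by
    simpa using Tuple.monotone_sort (fun i => -x i) hjk⟩

noncomputable def levelSet (x : Fin n → ℝ) (θ : ℝ) : Finset (Fin n) :=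
  univ.filter fun i => θ ≤ x i

noncomputable def thresholdSeq (x : Fin n → ℝ) (σ : Equiv.Perm (Fin n)) : ℕ → ℝ
  | 0 => 1
  | k + 1 => if h : k < n then x (σ ⟨k, h⟩) else 0

def sortedPrefix (σ : Equiv.Perm (Fin n)) (k : ℕ) : Finset (Fin n) :=
  (univ.filter fun j : Fin n => (j : ℕ) < k).image σ

theorem thresholdSeq_succ_of_lt (x : Fin n → ℝ) (σ : Equiv.Perm (Fin n)) {k : ℕ} (hk : k < n) :
    thresholdSeq x σ (k + 1) = x (σ ⟨k, hk⟩) :=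
  dif_pos hk

theorem thresholdSeq_succ_of_le (x : Fin n → ℝ) (σ : Equiv.Perm (Fin n)) {k : ℕ} (hk : n ≤ k) :
    thresholdSeq x σ (k + 1) = 0 :=
  dif_neg hk.not_gt

theorem thresholdSeq_nonneg {x : Fin n → ℝ} (σ : Equiv.Perm (Fin n)) (hx : ∀ i, 0 ≤ x i) :
    ∀ k, 0 ≤ thresholdSeq x σ k
  | 0 => zero_le_one
  | k + 1 => by
    by_cases hk : k < n
    · exact (thresholdSeq_succ_of_lt x σ hk).symm ▸ hx _
    · exact (thresholdSeq_succ_of_le x σ (not_lt.1 hk)).symm ▸ le_rfl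

theorem sortedPrefix_zero (σ : Equiv.Perm (Fin n)) : sortedPrefix σ 0 = ∅ := by
  simp [sortedPrefix]

theorem sum_range_mul_sub_eq_sum_range_sub_mul (a G : ℕ → ℝ) (hG0 : G 0 = 0)
    (han : a n = 0) :
    ∑ k ∈ range n, a k * (G (k + 1) - G k) = ∑ k ∈ range n, (a k - a (k + 1)) * G (k + 1) := by
  have hshift : ∑ k ∈ range n, a k * G k = ∑ k ∈ range n, a (k + 1) * G (k + 1) := by
    have h := (sum_range_succ (fun k => a k * G k) n).symm.trans
      (sum_range_succ' (fun k => a k * G k) n)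
    simpa only [hG0, han, mul_zero, zero_mul, add_zero] using h
  simp only [mul_sub, sub_mul, sum_sub_distrib, hshift]

theorem lovaszVal_eq_sum_thresholdSeq {F : Finset (Fin n) → ℝ} (hF0 : F ∅ = 0)
    (x : Fin n → ℝ) (σ : Equiv.Perm (Fin n)) :
    lovaszVal F x σ = ∑ k ∈ range (n + 1),
      (thresholdSeq x σ k - thresholdSeq x σ (k + 1)) * F (sortedPrefix σ k) := by
  calc lovaszVal F x σ
      = ∑ k ∈ range n, thresholdSeq x σ (k + 1) *
          (F (sortedPrefix σ (k + 1)) - F (sortedPrefix σ k)) := by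
        rw [lovaszVal, ← Fin.sum_univ_eq_sum_range]
        refine sum_congr rfl fun k _ => ?_
        have hle : (univ.filter fun j => j ≤ k) = univ.filter fun j : Fin n => (j : ℕ) < k + 1 := by
          ext j
          simp only [mem_filter, mem_univ, true_and, Fin.le_def]
          omega
        simp only [thresholdSeq_succ_of_lt x σ k.isLt, sortedPrefix, hle, Fin.lt_def]
    _ = ∑ k ∈ range n, (thresholdSeq x σ (k + 1) - thresholdSeq x σ (k + 1 + 1)) *
          F (sortedPrefix σ (k + 1)) :=
        sum_range_mul_sub_eq_sum_range_sub_mul _ (fun k => F (sortedPrefix σ k))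
          (by simp only [sortedPrefix_zero, hF0]) (thresholdSeq_succ_of_le x σ le_rfl)
    _ = _ := by rw [sum_range_succ' _ n, sortedPrefix_zero, hF0, mul_zero, add_zero]

namespace SortsDesc

variable {x : Fin n → ℝ} {σ : Equiv.Perm (Fin n)}

theorem apply_le_thresholdSeq_succ (hσ : SortsDesc x σ) {k : ℕ} {j : Fin n} (hkj : k ≤ j) :
    x (σ j) ≤ thresholdSeq x σ (k + 1) := by
  have hk : k < n := hkj.trans_lt j.isLt
  rw [thresholdSeq_succ_of_lt x σ hk]
  exact hσ ⟨k, hk⟩ j hkj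

theorem thresholdSeq_le_apply (hσ : SortsDesc x σ) {k : ℕ} (hk : k ≤ n) {j : Fin n}
    (hjk : (j : ℕ) < k) : thresholdSeq x σ k ≤ x (σ j) := by
  obtain ⟨k, rfl⟩ := Nat.exists_eq_add_one_of_ne_zero (Nat.ne_zero_of_lt hjk)
  rw [thresholdSeq_succ_of_lt x σ hk]
  exact hσ j ⟨k, hk⟩ (Nat.le_of_lt_succ hjk)

theorem antitone_thresholdSeq (hσ : SortsDesc x σ) (hx : ∀ i, x i ∈ Set.Icc (0 : ℝ) 1) :
    Antitone (thresholdSeq x σ) := by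
  refine antitone_nat_of_succ_le fun k => ?_
  match k with
  | 0 =>
    by_cases hn : 0 < n
    · exact (thresholdSeq_succ_of_lt x σ hn).symm ▸ (hx _).2
    · exact (thresholdSeq_succ_of_le x σ (not_lt.1 hn)).symm ▸ zero_le_one
  | k + 1 =>
    by_cases hk : k + 1 < n
    · rw [thresholdSeq_succ_of_lt x σ hk]
      exact hσ.apply_le_thresholdSeq_succ (j := ⟨k + 1, hk⟩) k.le_succ
    · rw [thresholdSeq_succ_of_le x σ (not_lt.1 hk)]
      exact thresholdSeq_nonneg σ (fun i => (hx i).1) _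

theorem levelSet_eq_sortedPrefix (hσ : SortsDesc x σ) {k : ℕ} (hk : k ≤ n)
    (hdrop : thresholdSeq x σ (k + 1) < thresholdSeq x σ k) :
    levelSet x (thresholdSeq x σ k) = sortedPrefix σ k := by
  ext i
  obtain ⟨j, rfl⟩ := σ.surjective i
  simp only [levelSet, sortedPrefix, mem_filter, mem_univ, true_and,
    σ.injective.mem_finset_image]
  refine ⟨fun hj => ?_, hσ.thresholdSeq_le_apply hk⟩
  by_contra hkj
  linarith [hσ.apply_le_thresholdSeq_succ (not_lt.1 hkj)]

theorem lovaszVal_mem_convexHull {F : Finset (Fin n) → ℝ} (hF0 : F ∅ = 0)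
    (hσ : SortsDesc x σ) (hx : ∀ i, x i ∈ Set.Icc (0 : ℝ) 1) :
    lovaszVal F x σ ∈ convexHull ℝ ((fun θ => F (levelSet x θ)) '' Set.Ioc 0 1) := by
  classical
  set w : ℕ → ℝ := fun k => thresholdSeq x σ k - thresholdSeq x σ (k + 1)
  have hanti := hσ.antitone_thresholdSeq hx
  have hw0 : ∀ k, 0 ≤ w k := fun k => sub_nonneg.2 (hanti k.le_succ)
  have hw1 : ∑ k ∈ range (n + 1), w k = 1 := by
    rw [sum_range_sub' (thresholdSeq x σ), thresholdSeq_succ_of_le x σ le_rfl, sub_zero]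
    rfl
  have hval : lovaszVal F x σ = ∑ k ∈ range (n + 1), w k • F (sortedPrefix σ k) :=
    lovaszVal_eq_sum_thresholdSeq hF0 x σ
  rw [hval, ← centerMass_eq_of_sum_1 _ _ hw1, ← centerMass_filter_ne_zero]
  refine centerMass_mem_convexHull _ (fun k _ => hw0 k) ?_ fun k hk => ?_
  · rw [sum_filter_ne_zero, hw1]
    exact one_pos
  obtain ⟨hkn, hwk⟩ := mem_filter.1 hk
  have hdrop : thresholdSeq x σ (k + 1) < thresholdSeq x σ k := sub_pos.1 ((hw0 k).lt_of_ne' hwk)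
  refine ⟨thresholdSeq x σ k, ⟨?_, hanti (Nat.zero_le k)⟩, ?_⟩
  · exact (thresholdSeq_nonneg σ (fun i => (hx i).1) _).trans_lt hdrop
  · exact congrArg F (levelSet_eq_sortedPrefix hσ (Nat.lt_succ_iff.1 (mem_range.1 hkn)) hdrop)

end SortsDesc

theorem levelSet_indicator (S : Finset (Fin n)) {θ : ℝ} (hθ : θ ∈ Set.Ioc (0 : ℝ) 1) :
    levelSet (fun i => if i ∈ S then (1 : ℝ) else 0) θ = S := by
  ext i
  simp only [levelSet, mem_filter, mem_univ, true_and]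
  split_ifs with hi
  · simpa [hi] using hθ.2
  · simpa [hi] using hθ.1

namespace IsLovasz

variable {F : Finset (Fin n) → ℝ} {f : (Fin n → ℝ) → ℝ}

theorem exists_levelSet_le (hf : IsLovasz F f) (hF0 : F ∅ = 0) {x : Fin n → ℝ}
    (hx : ∀ i, x i ∈ Set.Icc (0 : ℝ) 1) : ∃ θ ∈ Set.Ioc (0 : ℝ) 1, F (levelSet x θ) ≤ f x := by
  obtain ⟨σ, hσ⟩ := exists_sortsDesc x
  have hmem := hσ.lovaszVal_mem_convexHull hF0 hx
  rw [← hf x σ hσ] at hmem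
  obtain ⟨_, ⟨θ, hθ, rfl⟩, hle⟩ :=
    (concaveOn_id convex_univ).exists_le_of_mem_convexHull (Set.subset_univ _) hmem
  exact ⟨θ, hθ, hle⟩

theorem apply_indicator (hf : IsLovasz F f) (hF0 : F ∅ = 0) (S : Finset (Fin n)) :
    f (fun i => if i ∈ S then 1 else 0) = F S := by
  have hx : ∀ i, (if i ∈ S then (1 : ℝ) else 0) ∈ Set.Icc (0 : ℝ) 1 := fun i => by
    split_ifs <;> norm_num
  obtain ⟨σ, hσ⟩ := exists_sortsDesc fun i => if i ∈ S then (1 : ℝ) else 0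
  have hsub : (fun θ => F (levelSet (fun i => if i ∈ S then (1 : ℝ) else 0) θ)) '' Set.Ioc 0 1
      ⊆ {F S} := by
    rintro _ ⟨θ, hθ, rfl⟩
    exact congrArg F (levelSet_indicator S hθ)
  have hmem := convexHull_mono hsub (hσ.lovaszVal_mem_convexHull hF0 hx)
  rwa [convexHull_singleton, ← hf _ σ hσ] at hmem

end IsLovasz

end LovaszExtension

theorem statement2_general {n : ℕ} (F : Finset (Fin n) → ℝ) (hF0 : F ∅ = 0)
    (f : (Fin n → ℝ) → ℝ) (hf : IsLovasz F f) :
    (∃ m : ℝ, IsLeast (Set.range F) m ∧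
      IsLeast (f '' {x : Fin n → ℝ | ∀ i, x i ∈ Set.Icc (0:ℝ) 1}) m) ∧
    ∀ x : Fin n → ℝ, (∀ i, x i ∈ Set.Icc (0:ℝ) 1) →
      ∃ θ ∈ Set.Ioc (0:ℝ) 1, F (Finset.univ.filter (fun i => θ ≤ x i)) ≤ f x := by
  obtain ⟨S₀, -, hS₀⟩ := univ.exists_min_image F univ_nonempty
  have hmin : ∀ S, F S₀ ≤ F S := fun S => hS₀ S (mem_univ S)
  refine ⟨⟨F S₀, ⟨⟨S₀, rfl⟩, ?_⟩, ⟨_, fun i => ?_, hf.apply_indicator hF0 S₀⟩, ?_⟩,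
    fun x hx => hf.exists_levelSet_le hF0 hx⟩
  · rintro _ ⟨S, rfl⟩
    exact hmin S
  · split_ifs <;> norm_num
  · rintro _ ⟨x, hx, rfl⟩
    obtain ⟨θ, -, hθ⟩ := hf.exists_levelSet_le hF0 hx
    exact (hmin _).trans hθ

/-- for submodular `F` with `F ∅ = 0` and Lovász extension `f`,
the minimum of `F` over all subsets equals the minimum of `f` over `[0,1]^V`
(both minima being attained), and for every `x ∈ [0,1]^V` there is a threshold
`θ ∈ (0,1]` whose level set `{i : x i ≥ θ}` satisfies `F(S_θ) ≤ f(x)`. -/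
theorem statement2 {n : ℕ} (F : Finset (Fin n) → ℝ) (hF0 : F ∅ = 0) (hF : Submodular F)
    (f : (Fin n → ℝ) → ℝ) (hf : IsLovasz F f) :
    (∃ m : ℝ, IsLeast (Set.range F) m ∧
      IsLeast (f '' {x : Fin n → ℝ | ∀ i, x i ∈ Set.Icc (0:ℝ) 1}) m) ∧
    ∀ x : Fin n → ℝ, (∀ i, x i ∈ Set.Icc (0:ℝ) 1) →
      ∃ θ ∈ Set.Ioc (0:ℝ) 1, F (Finset.univ.filter (fun i => θ ≤ x i)) ≤ f x :=
  statement2_general F hF0 f hf
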